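/- Suppose (I,<) forms a set of tight indiscernibles generating M* over M, where I is order-isomorphic to (ℕ,<). For each n ∈ ℕ let Mₙ be the elementary submodel of M* generated by M ∪ {i ∈ I : i ≥ n}. Then each Mₙ₊₁ is a proper elementary submodel of Mₙ, and the intersection of all the Mₙ equals M. -/

import Mathlib

open FirstOrder Language

/-- `f : N^k → N` is parametrically definable (over the parameter set `A`). -/
def ParamDefFun (L : Language) {N : Type*} [L.Structure N] (A : Set N) (k : ℕ)
    (f : (Fin k → N) → N) : Prop :=
  Set.Definable A L {x : Fin (k + 1) → N | x (Fin.last k) = f (fun i => x i.castSucc)}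

/-- `(ι,<)`, presented by `e : ι → N`, is a set of order indiscernibles over the
parameter set `A`: any two increasing tuples satisfy the same formulas with
parameters from `A`. -/
def OrderIndisc (L : Language) {N : Type*} [L.Structure N] (A : Set N)
    {ι : Type*} [LinearOrder ι] (e : ι → N) : Prop :=
  ∀ (k : ℕ) (φ : (L[[↥A]]).Formula (Fin k)) (i j : Fin k → ι),
    StrictMono i → StrictMono j → (φ.Realize (e ∘ i) ↔ φ.Realize (e ∘ j))

/-- Property (2) of tight indiscernibles: `N` is generated over `A` by the image of `e`,
via parametrically `A`-definable functions applied to increasing tuples. -/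
def GeneratedBy (L : Language) {N : Type*} [L.Structure N] (A : Set N)
    {ι : Type*} [LinearOrder ι] (e : ι → N) : Prop :=
  ∀ a : N, ∃ (k : ℕ) (f : (Fin k → N) → N), ParamDefFun L A k f ∧
    ∃ i : Fin k → ι, StrictMono i ∧ f (e ∘ i) = a

/-- Property (3) of tight indiscernibles: if a parametrically `A`-definable function takes
the same value at two increasing tuples, the second lying entirely above the first, then
that common value lies in `A`. -/
def TightProp (L : Language) {N : Type*} [L.Structure N] (A : Set N)
    {ι : Type*} [LinearOrder ι] (e : ι → N) : Prop :=
  ∀ (k : ℕ) (f : (Fin k → N) → N), ParamDefFun L A k f →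
    ∀ i j : Fin k → ι, StrictMono i → StrictMono j → (∀ a b, i a < j b) →
      f (e ∘ i) = f (e ∘ j) → f (e ∘ i) ∈ A

/-- `A` has definable Skolem functions (realized in `N`). -/
def HasDefSkolem (L : Language) {N : Type*} [L.Structure N] (A : Set N) : Prop :=
  ∀ (n : ℕ) (φ : (L[[↥A]]).Formula (Fin (n + 1))), ∃ f : (Fin n → N) → N,
    ParamDefFun L A n f ∧
      ∀ x : Fin n → N, (∃ b, φ.Realize (Fin.snoc x b)) → φ.Realize (Fin.snoc x (f x))


/-- The submodel of `N` generated by `A` together with `{e i : i ∈ T}`: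
all values of parametrically `A`-definable functions at increasing tuples from `T`,
together with `A`. -/
def genSet (L : Language) {N : Type*} [L.Structure N] (A : Set N)
    {ι : Type*} [LinearOrder ι] (e : ι → N) (T : Set ι) : Set N :=
  A ∪ {a | ∃ (k : ℕ) (f : (Fin k → N) → N), ParamDefFun L A k f ∧
    ∃ i : Fin k → ι, StrictMono i ∧ (∀ t, i t ∈ T) ∧ f (e ∘ i) = a}

/-!
Every element of `M_n` has the form `f(ī)` with `f` an `M`-definable function and `ī` an
increasing tuple of indiscernibles `≥ n`. If such a value equals `f'(j̄)` with `j̄` lying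
entirely above `ī`, indiscernibility lets us slide `j̄` further up to a tuple `j̄'` above `j̄`
itself, so `f'(j̄) = f'(j̄')` and tightness puts the value in `M`. Applied to `e n = f(ī)` with
`ī ≥ n + 1` this shows `e n ∉ M_{n+1}`; applied to an element of every `M_n` it shows that
`⋂ M_n = M`. Elementarity is the Tarski–Vaught test: `M_{n+1}` is closed under the
definable Skolem functions.
-/

section

open Set

variable {L : Language} {N : Type*} [L.Structure N] {A : Set N}

theorem paramDefFun_iff_definableFun {k : ℕ} {f : (Fin k → N) → N} :
    ParamDefFun L A k f ↔ A.DefinableFun L f := by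
  unfold ParamDefFun DefinableFun
  constructor
  · intro h
    convert h.preimage_comp (Fin.lastCases none some : Fin (k + 1) → Option (Fin k)) using 1
    ext v
    simp [Function.tupleGraph, eq_comm, Function.comp_def]
  · intro h
    convert h.preimage_comp (fun o : Option (Fin k) => o.elim (Fin.last k) Fin.castSucc) using 1
    ext v
    simp [Function.tupleGraph, eq_comm, Function.comp_def]

theorem Set.definableMap_comp_right {α β : Type*} (σ : α → β) :
    A.DefinableMap L (fun y : β → N => y ∘ σ) :=
  fun _ => DefinableFun.proj L

theorem Set.DefinableFun.comp_right {α β : Type*} [Finite α] {f : (α → N) → N}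
    (hf : A.DefinableFun L f) (σ : α → β) : A.DefinableFun L (fun y : β → N => f (y ∘ σ)) :=
  DefinableFun.comp (definableMap_comp_right σ) hf

theorem StrictMono.fin_append {ι : Type*} [Preorder ι] {k k' : ℕ} {i : Fin k → ι}
    {j : Fin k' → ι} (hi : StrictMono i) (hj : StrictMono j) (hij : ∀ a b, i a < j b) :
    StrictMono (Fin.append i j) := by
  intro a b hab
  induction a using Fin.addCases with
  | left a =>
    induction b using Fin.addCases with
    | left b =>
      rw [Fin.append_left, Fin.append_left]
      exact hi ((Fin.strictMono_castAdd k').lt_iff_lt.1 hab)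
    | right b => simpa [Fin.append_left, Fin.append_right] using hij a b
  | right a =>
    induction b using Fin.addCases with
    | left b => simp [Fin.lt_def] at hab; omega
    | right b =>
      rw [Fin.append_right, Fin.append_right]
      exact hj ((Fin.natAdd_lt_natAdd_iff k).1 hab)

theorem OrderIndisc.apply_eq_of_apply_eq {ι : Type*} [LinearOrder ι] {e : ι → N}
    (hind : OrderIndisc L A e) {k k' : ℕ} {f : (Fin k → N) → N} {f' : (Fin k' → N) → N}
    (hf : A.DefinableFun L f) (hf' : A.DefinableFun L f') {i : Fin k → ι} {j j' : Fin k' → ι}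
    (hi : StrictMono i) (hj : StrictMono j) (hj' : StrictMono j') (hij : ∀ a b, i a < j b)
    (hij' : ∀ a b, i a < j' b) (h : f (e ∘ i) = f' (e ∘ j)) : f (e ∘ i) = f' (e ∘ j') := by
  obtain ⟨φ, hφ⟩ := (hf.comp_right (Fin.castAdd k')).ofPred_eq (hf'.comp_right (Fin.natAdd k))
  have realize_iff : ∀ j : Fin k' → ι,
      φ.Realize (e ∘ Fin.append i j) ↔ f (e ∘ i) = f' (e ∘ j) := fun j => by
    rw [← Set.mem_ofPred_eq (p := φ.Realize), ← hφ]
    simp [Function.comp_def, Fin.append_left, Fin.append_right]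
  rw [← realize_iff] at h ⊢
  exact (hind _ φ _ _ (hi.fin_append hj hij) (hi.fin_append hj' hij')).1 h

theorem TightProp.mem_of_apply_eq {e : ℕ → N} (htight : TightProp L A e)
    (hind : OrderIndisc L A e) {k k' : ℕ} {f : (Fin k → N) → N} {f' : (Fin k' → N) → N}
    (hf : A.DefinableFun L f) (hf' : A.DefinableFun L f') {i : Fin k → ℕ} {j : Fin k' → ℕ}
    (hi : StrictMono i) (hj : StrictMono j) (hij : ∀ a b, i a < j b)
    (h : f (e ∘ i) = f' (e ∘ j)) : f' (e ∘ j) ∈ A := by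
  let j' : Fin k' → ℕ := fun b => j b + (Finset.univ.sup j + 1)
  have hjj' : ∀ a b, j a < j' b := fun a b => by
    simp only [j']
    have := Finset.le_sup (f := j) (Finset.mem_univ a)
    omega
  have hj' : StrictMono j' := hj.add_const _
  have h' := hind.apply_eq_of_apply_eq hf hf' hi hj hj' hij
    (fun a b => (hij a b).trans (hjj' b b)) h
  exact htight k' f' (paramDefFun_iff_definableFun.2 hf') j j' hj hj' hjj' (h.symm.trans h')

section Generated

variable {ι : Type*} [LinearOrder ι] {e : ι → N} {T : Set ι}

theorem mem_genSet_iff {a : N} :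
    a ∈ genSet L A e T ↔ ∃ (k : ℕ) (f : (Fin k → N) → N), A.DefinableFun L f ∧
      ∃ i : Fin k → ι, StrictMono i ∧ (∀ t, i t ∈ T) ∧ f (e ∘ i) = a := by
  simp only [genSet, mem_union, mem_ofPred_eq, paramDefFun_iff_definableFun]
  refine ⟨fun h => h.elim (fun ha => ?_) id, Or.inr⟩
  exact ⟨0, fun _ => a, L.definableFun_const _ ha, finZeroElim, Subsingleton.strictMono _,
    finZeroElim, rfl⟩

theorem genSet_mono {T' : Set ι} (hT : T ⊆ T') : genSet L A e T ⊆ genSet L A e T' :=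
  fun _ => Or.imp_right fun ⟨k, f, hf, i, hi, hiT, hfi⟩ =>
    ⟨k, f, hf, i, hi, fun t => hT (hiT t), hfi⟩

theorem apply_mem_genSet {t : ι} (ht : t ∈ T) : e t ∈ genSet L A e T :=
  mem_genSet_iff.2 ⟨1, fun x => x 0, DefinableFun.proj L, fun _ => t, Subsingleton.strictMono _,
    fun _ => ht, rfl⟩

theorem Set.DefinableFun.apply_mem_genSet {m : ℕ} {g : (Fin m → N) → N}
    (hg : A.DefinableFun L g) {x : Fin m → N} (hx : ∀ t, x t ∈ genSet L A e T) :
    g x ∈ genSet L A e T := by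
  classical
  choose k f hf i hi hiT hfi using fun t => mem_genSet_iff.1 (hx t)
  set J : Finset ι := Finset.univ.biUnion fun t => Finset.univ.image (i t)
  set u := J.orderEmbOfFin rfl
  have mem_range : ∀ t s, i t s ∈ range u := fun t s => by
    rw [Finset.range_orderEmbOfFin]
    simpa [J] using ⟨t, s, rfl⟩
  choose σ hσ using mem_range
  refine mem_genSet_iff.2 ⟨J.card, fun y => g fun t => f t (y ∘ σ t),
    DefinableFun.comp (fun t => (hf t).comp_right (σ t)) hg, u, u.strictMono, fun s => ?_, ?_⟩
  · obtain ⟨t, -, s', -, hs'⟩ := by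
      simpa only [J, Finset.mem_biUnion, Finset.mem_image] using J.orderEmbOfFin_mem rfl s
    exact hs' ▸ hiT t s'
  · show g (fun t => f t ((e ∘ u) ∘ σ t)) = g x
    congr with t
    rw [← hfi t, Function.comp_assoc, show u ∘ σ t = i t from funext (hσ t)]

theorem HasDefSkolem.exists_mem_genSet_realize_snoc (hskolem : HasDefSkolem L A) {m : ℕ}
    (φ : L.Formula (Fin (m + 1))) {x : Fin m → N} (hx : ∀ t, x t ∈ genSet L A e T)
    (h : ∃ b, φ.Realize (Fin.snoc x b)) : ∃ b ∈ genSet L A e T, φ.Realize (Fin.snoc x b) := by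
  obtain ⟨g, hg, hgφ⟩ := hskolem m ((L.lhomWithConstants A).onFormula φ)
  simp only [LHom.realize_onFormula] at hgφ
  exact ⟨g x, (paramDefFun_iff_definableFun.1 hg).apply_mem_genSet hx, hgφ x h⟩

end Generated

section TightNat

variable {e : ℕ → N}

theorem apply_notMem_genSet_succ_le (hdisj : ∀ n, e n ∉ A) (hind : OrderIndisc L A e)
    (htight : TightProp L A e) (n : ℕ) : e n ∉ genSet L A e {i | n + 1 ≤ i} := by
  rw [mem_genSet_iff]
  rintro ⟨k, f, hf, i, hi, hiT, hfi⟩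
  exact hdisj n (hfi ▸ htight.mem_of_apply_eq hind (DefinableFun.proj L (i := (0 : Fin 1))) hf
    (i := fun _ => n) (Subsingleton.strictMono _) hi (fun _ b => hiT b) hfi.symm)

theorem iInter_genSet_le_eq (hind : OrderIndisc L A e) (htight : TightProp L A e) :
    ⋂ n : ℕ, genSet L A e {i | n ≤ i} = A := by
  refine Subset.antisymm (fun a ha => ?_) fun a ha => mem_iInter.2 fun _ => Or.inl ha
  rw [mem_iInter] at ha
  obtain ⟨k, f, hf, i, hi, -, rfl⟩ := mem_genSet_iff.1 (ha 0)
  obtain ⟨k', f', hf', j, hj, hjT, hj'⟩ := mem_genSet_iff.1 (ha (Finset.univ.sup i + 1))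
  have hij : ∀ a b, i a < j b := fun a b => by
    have := Finset.le_sup (f := i) (Finset.mem_univ a)
    have : Finset.univ.sup i + 1 ≤ j b := hjT b
    omega
  exact hj' ▸ htight.mem_of_apply_eq hind hf hf' hi hj hij hj'.symm

end TightNat

end

theorem stmt_13_general {L : Language} {N : Type*} [L.Structure N]
    (S : L.ElementarySubstructure N) (e : ℕ → N)
    (hdisj : ∀ n : ℕ, e n ∉ S)
    (hskolem : HasDefSkolem L (S : Set N))
    (hind : OrderIndisc L (S : Set N) e)
    (htight : TightProp L (S : Set N) e) :
    (∀ n : ℕ,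
      genSet L (S : Set N) e {i | n + 1 ≤ i} ⊂ genSet L (S : Set N) e {i | n ≤ i}) ∧
    (∀ (n m : ℕ) (φ : L.Formula (Fin (m + 1))) (x : Fin m → N),
      (∀ t, x t ∈ genSet L (S : Set N) e {i | n + 1 ≤ i}) →
      (∃ b ∈ genSet L (S : Set N) e {i | n ≤ i}, φ.Realize (Fin.snoc x b)) →
      (∃ b ∈ genSet L (S : Set N) e {i | n + 1 ≤ i}, φ.Realize (Fin.snoc x b))) ∧
    (⋂ n : ℕ, genSet L (S : Set N) e {i | n ≤ i}) = (S : Set N) := by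
  refine ⟨fun n => ?_, fun n m φ x hx ⟨b, _, hb⟩ => ?_, iInter_genSet_le_eq hind htight⟩
  · exact (Set.ssubset_iff_of_subset (genSet_mono fun i hi => Nat.le_of_succ_le hi)).2
      ⟨e n, apply_mem_genSet (le_refl n), apply_notMem_genSet_succ_le hdisj hind htight n⟩
  · exact hskolem.exists_mem_genSet_realize_snoc φ hx ⟨b, hb⟩

/-- with tight indiscernibles of order type ℕ, the submodels Mₙ generated by
M ∪ {i ∈ I : i ≥ n} form a strictly decreasing elementary chain whose intersection is M.
(Elementarity of Mₙ₊₁ in Mₙ is rendered by the Tarski–Vaught condition, realization being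
computed in M*.) -/
theorem stmt_13 {L : Language} {N : Type*} [L.Structure N]
    (S : L.ElementarySubstructure N) (e : ℕ → N)
    (hinj : Function.Injective e) (hdisj : ∀ n : ℕ, e n ∉ S)
    (hskolem : HasDefSkolem L (S : Set N))
    (hind : OrderIndisc L (S : Set N) e)
    (hgen : GeneratedBy L (S : Set N) e)
    (htight : TightProp L (S : Set N) e) :
    (∀ n : ℕ,
      genSet L (S : Set N) e {i | n + 1 ≤ i} ⊂ genSet L (S : Set N) e {i | n ≤ i}) ∧
    (∀ (n m : ℕ) (φ : L.Formula (Fin (m + 1))) (x : Fin m → N),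
      (∀ t, x t ∈ genSet L (S : Set N) e {i | n + 1 ≤ i}) →
      (∃ b ∈ genSet L (S : Set N) e {i | n ≤ i}, φ.Realize (Fin.snoc x b)) →
      (∃ b ∈ genSet L (S : Set N) e {i | n + 1 ≤ i}, φ.Realize (Fin.snoc x b))) ∧
    (⋂ n : ℕ, genSet L (S : Set N) e {i | n ≤ i}) = (S : Set N) :=
  stmt_13_general S e hdisj hskolem hind htight
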